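/- Let p be a prime and n a positive integer. If G is a direct sum of copies of Z/p^n Z and f : G' → G is an injective homomorphism from a group G' that is also a direct sum of copies of Z/p^n Z into a direct sum G of cyclic p-groups of order at most p^n, then f(G') is a direct summand of G. -/

import Mathlib

/-- The subgroup of elements annihilated by some power of `p`
(the `p`-primary component). -/
def pComponent (G : Type*) [AddCommGroup G] (p : ℕ) : AddSubgroup G where
  carrier := {x | ∃ k : ℕ, p ^ k • x = 0}
  zero_mem' := ⟨0, smul_zero _⟩
  add_mem' := by
    rintro a b ⟨k, hk⟩ ⟨l, hl⟩
    exact ⟨k + l, by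
      rw [smul_add, pow_add, mul_smul, mul_smul, smul_comm (p ^ k) (p ^ l) a, hk, hl,
        smul_zero, smul_zero, add_zero]⟩
  neg_mem' := by
    rintro a ⟨k, hk⟩
    exact ⟨k, by rw [smul_neg, hk, neg_zero]⟩

/-- The torsion subgroup. -/
def torsionSub (G : Type*) [AddCommGroup G] : AddSubgroup G where
  carrier := {x | ∃ n : ℕ, 0 < n ∧ n • x = 0}
  zero_mem' := ⟨1, one_pos, smul_zero _⟩
  add_mem' := by
    rintro a b ⟨m, hm, hma⟩ ⟨n, hn, hnb⟩
    exact ⟨m * n, Nat.mul_pos hm hn, by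
      rw [smul_add, mul_smul, mul_smul, smul_comm m n a, hma, hnb, smul_zero, smul_zero,
        add_zero]⟩
  neg_mem' := by
    rintro a ⟨n, hn, hna⟩
    exact ⟨n, hn, by rw [smul_neg, hna, neg_zero]⟩

/-- A subgroup `A` is essential in a direct summand of the ambient group. -/
def EssentialInSummand {G : Type*} [AddCommGroup G] (A : AddSubgroup G) : Prop :=
  ∃ S S' : AddSubgroup G, IsCompl S S' ∧ A ≤ S ∧
    ∀ X : AddSubgroup G, X ≤ S → X ≠ ⊥ → A ⊓ X ≠ ⊥

/-- Semi-generalized co-Bassian group. -/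
def IsSGCB (G : Type*) [AddCommGroup G] : Prop :=
  ∀ (N : AddSubgroup G) (φ : G →+ G ⧸ N), Function.Injective φ →
    EssentialInSummand φ.range

/-- Divisible abelian group. -/
def IsDivisibleGroup (G : Type*) [AddCommGroup G] : Prop :=
  ∀ (x : G) (n : ℕ), 0 < n → ∃ y : G, n • y = x

/-- Elementary abelian group: torsion, and each `p`-primary component is killed by `p`. -/
def IsElementaryGroup (G : Type*) [AddCommGroup G] : Prop :=
  (∀ x : G, ∃ n : ℕ, 0 < n ∧ n • x = 0) ∧
    ∀ p : ℕ, p.Prime → ∀ x : G, x ∈ pComponent G p → p • x = 0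

/-- `G` decomposes as (divisible) ⊕ (elementary). -/
def IsDplusE (G : Type*) [AddCommGroup G] : Prop :=
  ∃ D E : AddSubgroup G, IsCompl D E ∧ IsDivisibleGroup ↥D ∧ IsElementaryGroup ↥E

/-- The Prüfer `p`-group, realized as the `p`-primary component of `ℚ/ℤ`. -/
def PruferGroup (p : ℕ) : Type :=
  ↥(pComponent (ℚ ⧸ AddSubgroup.zmultiples (1 : ℚ)) p)

instance (p : ℕ) : AddCommGroup (PruferGroup p) :=
  inferInstanceAs (AddCommGroup ↥(pComponent (ℚ ⧸ AddSubgroup.zmultiples (1 : ℚ)) p))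

/-- `Z_{p^α}` for `α ∈ ℕ ∪ {∞}`: the cyclic group `ZMod (p^n)` for `α = n` finite,
and the Prüfer `p`-group for `α = ∞`. -/
def Zp (p : ℕ) (α : ℕ∞) : Type :=
  WithTop.recTopCoe (PruferGroup p) (fun n => ZMod (p ^ n)) α

instance (p : ℕ) (α : ℕ∞) : AddCommGroup (Zp p α) := by
  induction α using WithTop.recTopCoe with
  | top => exact inferInstanceAs (AddCommGroup (PruferGroup p))
  | coe n => exact inferInstanceAs (AddCommGroup (ZMod (p ^ n)))

/-- A `p`-group has generalized finite `p`-rank if it is a finite direct sum of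
homocyclic components `Z_{p^{σ_j}}^{(ρ_j)}` with `σ_1 < ⋯ < σ_n` in `ω ∪ {∞}` and
`ρ_j` finite for all `j > 1`. -/
def HasGenFiniteRank (p : ℕ) (H : Type u) [AddCommGroup H] : Prop :=
  ∃ (n : ℕ) (σ : Fin n → ℕ∞) (ρ : Fin n → Type u),
    StrictMono σ ∧ (∀ j : Fin n, 0 < j.val → Finite (ρ j)) ∧
      Nonempty (H ≃+ DirectSum (Fin n) (fun j => ρ j →₀ Zp p (σ j)))


/-- Hopfian group: every surjective endomorphism is injective. -/
def IsHopfian (G : Type*) [AddCommGroup G] : Prop :=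
  ∀ φ : G →+ G, Function.Surjective φ → Function.Injective φ

/-- co-Bassian group. -/
def IsCoBassian (G : Type*) [AddCommGroup G] : Prop :=
  ∀ (N : AddSubgroup G) (φ : G →+ G ⧸ N), Function.Injective φ → Function.Surjective φ

/-- generalized co-Bassian group. -/
def IsGenCoBassian (G : Type*) [AddCommGroup G] : Prop :=
  ∀ (N : AddSubgroup G) (φ : G →+ G ⧸ N), Function.Injective φ →
    ∃ S' : AddSubgroup (G ⧸ N), IsCompl φ.range S'

/-- The subgroup `pG` of an abelian group `G`. -/
def smulSub (p : ℕ) (G : Type*) [AddCommGroup G] : AddSubgroup G :=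
  (AddMonoidHom.mk' (fun x : G => p • x) (fun a b => smul_add p a b)).range



section Aux

/-- Divisibility in `ZMod (p^n)`: an element killed by `p^(n-k)` is divisible by `p^k`. -/
lemma zmod_div_of_smul_eq_zero {p n k : ℕ} (hp : p.Prime) (hk : k ≤ n)
    (c : ZMod (p ^ n)) (h : p ^ (n - k) • c = 0) :
    p ^ k • (((c.val / p ^ k : ℕ) : ZMod (p ^ n))) = c := by
  haveI : NeZero (p ^ n) := ⟨(pow_pos hp.pos n).ne'⟩
  have hc : ((c.val : ℕ) : ZMod (p ^ n)) = c := ZMod.natCast_rightInverse c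
  have h' : ((p ^ (n - k) * c.val : ℕ) : ZMod (p ^ n)) = 0 := by
    rw [Nat.cast_mul, hc, ← nsmul_eq_mul, h]
  rw [ZMod.natCast_eq_zero_iff] at h'
  have hdvd : p ^ k ∣ c.val := by
    have : p ^ (n - k) * p ^ k ∣ p ^ (n - k) * c.val := by
      rwa [← pow_add, Nat.sub_add_cancel hk]
    exact (mul_dvd_mul_iff_left (pow_ne_zero _ hp.ne_zero)).mp this
  calc p ^ k • (((c.val / p ^ k : ℕ) : ZMod (p ^ n)))
      = ((p ^ k * (c.val / p ^ k) : ℕ) : ZMod (p ^ n)) := by rw [Nat.cast_mul, ← nsmul_eq_mul]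
    _ = c := by rw [Nat.mul_div_cancel' hdvd, hc]

end Aux

section Aux2

/-- Divisibility in `J →₀ ZMod (p^n)`. -/
lemma finsupp_div_of_smul_eq_zero {p n k : ℕ} (hp : p.Prime) (hk : k ≤ n) {J : Type*}
    (x : J →₀ ZMod (p ^ n)) (h : p ^ (n - k) • x = 0) :
    ∃ y : J →₀ ZMod (p ^ n), p ^ k • y = x := by
  refine ⟨x.mapRange (fun c => ((c.val / p ^ k : ℕ) : ZMod (p ^ n))) (by simp), ?_⟩
  ext j
  have hj : p ^ (n - k) • x j = 0 := by
    rw [← Finsupp.smul_apply, h, Finsupp.coe_zero, Pi.zero_apply]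
  rw [Finsupp.smul_apply, Finsupp.mapRange_apply]
  exact zmod_div_of_smul_eq_zero hp hk (x j) hj

/-- Baer criterion for a `ZMod (p^n)`-module with the divisibility property. -/
lemma baer_of_div {p n : ℕ} (hp : p.Prime) (hn : 0 < n) {M : Type*} [AddCommGroup M]
    [Module (ZMod (p ^ n)) M]
    (hdiv : ∀ k ≤ n, ∀ x : M, p ^ (n - k) • x = 0 → ∃ y : M, p ^ k • y = x) :
    Module.Baer (ZMod (p ^ n)) M := by
  haveI : NeZero (p ^ n) := ⟨(pow_pos hp.pos n).ne'⟩
  haveI : IsPrincipalIdealRing (ZMod (p ^ n)) :=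
    IsPrincipalIdealRing.of_surjective (Int.castRingHom (ZMod (p ^ n))) ZMod.intCast_surjective
  intro I g
  obtain ⟨a, rfl⟩ := (IsPrincipalIdealRing.principal I).principal
  by_cases haz : a = 0
  · refine ⟨0, fun x mem => ?_⟩
    subst haz
    have hx : x = 0 := by symm; simpa using Submodule.mem_span_singleton.mp mem
    have hsub : (⟨x, mem⟩ : Submodule.span (ZMod (p ^ n)) ({0} : Set (ZMod (p ^ n)))) = 0 :=
      Subtype.ext hx
    rw [hsub, map_zero, LinearMap.zero_apply]
  · have hv : a.val ≠ 0 := fun h0 => haz (by rwa [ZMod.val_eq_zero] at h0)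
    obtain ⟨k, m, hvk, hm, hkn⟩ :
        ∃ k m : ℕ, p ^ k * m = a.val ∧ ¬ p ∣ m ∧ k ≤ n := by
      refine ⟨a.val.factorization p, a.val / p ^ a.val.factorization p,
        Nat.ordProj_mul_ordCompl_eq_self a.val p, Nat.not_dvd_ordCompl hp hv, ?_⟩
      have h1 : p ^ a.val.factorization p ≤ a.val := Nat.ordProj_le p hv
      have h2 : a.val < p ^ n := ZMod.val_lt a
      exact le_of_lt ((Nat.pow_lt_pow_iff_right hp.one_lt).mp (lt_of_le_of_lt h1 h2))
    have hc : ((a.val : ℕ) : ZMod (p ^ n)) = a := ZMod.natCast_rightInverse a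
    have ha_eq : a = ((p ^ k : ℕ) : ZMod (p ^ n)) * ((m : ℕ) : ZMod (p ^ n)) := by
      rw [← Nat.cast_mul, hvk, hc]
    have hmem : a ∈ Ideal.span ({a} : Set (ZMod (p ^ n))) := Ideal.subset_span rfl
    have h1 : p ^ (n - k) • (⟨a, hmem⟩ : Ideal.span ({a} : Set (ZMod (p ^ n)))) = 0 := by
      apply Subtype.ext
      show p ^ (n - k) • a = 0
      rw [nsmul_eq_mul, ha_eq, ← mul_assoc, ← Nat.cast_mul, ← pow_add,
        Nat.sub_add_cancel hkn, ← Nat.cast_mul, ZMod.natCast_eq_zero_iff]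
      exact dvd_mul_right (p ^ n) m
    have hann : p ^ (n - k) • g ⟨a, hmem⟩ = 0 := by
      rw [← map_nsmul, h1, map_zero]
    obtain ⟨y₀, hy₀⟩ := hdiv k hkn _ hann
    have hcop : Nat.Coprime m (p ^ n) :=
      Nat.Coprime.pow_right n (Nat.Coprime.symm (hp.coprime_iff_not_dvd.mpr hm))
    obtain ⟨u, hu⟩ := (ZMod.isUnit_iff_coprime m (p ^ n)).mpr hcop
    have hay : a • ((↑u⁻¹ : ZMod (p ^ n)) • y₀) = g ⟨a, hmem⟩ := by
      rw [smul_smul]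
      conv_lhs => rw [ha_eq, mul_assoc, ← hu, Units.mul_inv, mul_one, Nat.cast_smul_eq_nsmul]
      exact hy₀
    refine ⟨LinearMap.toSpanSingleton (ZMod (p ^ n)) M ((↑u⁻¹ : ZMod (p ^ n)) • y₀),
      fun x mem => ?_⟩
    obtain ⟨r, rfl⟩ := Ideal.mem_span_singleton'.mp mem
    have hsub : (⟨r * a, mem⟩ : Ideal.span ({a} : Set (ZMod (p ^ n)))) = r • ⟨a, hmem⟩ :=
      Subtype.ext rfl
    rw [LinearMap.toSpanSingleton_apply, hsub, map_smul, ← hay, mul_smul]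

end Aux2

universe u v


theorem homocyclic_image_isSummand (p n : ℕ) (hp : p.Prime) (hn : 0 < n)
    (G : Type u) (G' : Type v) [AddCommGroup G] [AddCommGroup G']
    (hG : ∃ (I : Type u) (k : I → ℕ), (∀ i, k i ≤ n) ∧
      Nonempty (G ≃+ DirectSum I (fun i => ZMod (p ^ k i))))
    (hG' : ∃ J : Type v, Nonempty (G' ≃+ (J →₀ ZMod (p ^ n))))
    (f : G' →+ G) (hf : Function.Injective f) :
    ∃ S' : AddSubgroup G, IsCompl f.range S' := by
  obtain ⟨I, kf, hk, ⟨eG⟩⟩ := hG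
  obtain ⟨J, ⟨eJ⟩⟩ := hG'
  haveI : NeZero (p ^ n) := ⟨(pow_pos hp.pos n).ne'⟩
  have hGexp : ∀ x : G, (p ^ n) • x = 0 := by
    intro x
    have hcomp : ∀ y : DirectSum I (fun i => ZMod (p ^ kf i)), (p ^ n) • y = 0 := by
      classical
      intro y
      induction y using DirectSum.induction_on with
      | zero => simp
      | of i z =>
        have hz : (p ^ n) • z = 0 := by
          have h0 : ((p ^ n : ℕ) : ZMod (p ^ kf i)) = 0 :=
            (ZMod.natCast_eq_zero_iff _ _).mpr (pow_dvd_pow p (hk i))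
          rw [nsmul_eq_mul, h0, zero_mul]
        rw [← map_nsmul, hz, map_zero]
      | add a b ha hb => rw [smul_add, ha, hb, add_zero]
    calc (p ^ n) • x = eG.symm ((p ^ n) • eG x) := by
          rw [map_nsmul, AddEquiv.symm_apply_apply]
      _ = 0 := by rw [hcomp, map_zero]
  have hFexp : ∀ z : J →₀ ZMod (p ^ n), (p ^ n) • z = 0 := by
    intro z
    ext j
    rw [Finsupp.smul_apply, nsmul_eq_mul, ZMod.natCast_self, zero_mul, Finsupp.coe_zero,
      Pi.zero_apply]
  have hG'exp : ∀ x : G', (p ^ n) • x = 0 := by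
    intro x
    calc (p ^ n) • x = eJ.symm ((p ^ n) • eJ x) := by
          rw [map_nsmul, AddEquiv.symm_apply_apply]
      _ = 0 := by rw [hFexp, map_zero]
  letI : Module (ZMod (p ^ n)) G := AddCommGroup.zmodModule hGexp
  letI : Module (ZMod (p ^ n)) G' := AddCommGroup.zmodModule hG'exp
  have hdiv : ∀ k ≤ n, ∀ x : G', p ^ (n - k) • x = 0 → ∃ y : G', p ^ k • y = x := by
    intro k hkle x hx
    have hx' : p ^ (n - k) • eJ x = 0 := by rw [← map_nsmul, hx, map_zero]
    obtain ⟨y', hy'⟩ := finsupp_div_of_smul_eq_zero hp hkle (eJ x) hx'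
    exact ⟨eJ.symm y', by rw [← map_nsmul, hy', AddEquiv.symm_apply_apply]⟩
  have hBaer := baer_of_div hp hn hdiv
  obtain ⟨r, hr⟩ := hBaer.extension_property (f.toZModLinearMap (p ^ n)) hf LinearMap.id
  set ra : G →+ G' := r.toAddMonoidHom with hra
  have hrf : ∀ a : G', ra (f a) = a := by
    intro a
    have h1 := LinearMap.congr_fun hr a
    rw [LinearMap.comp_apply, LinearMap.id_apply] at h1
    exact h1
  refine ⟨(f.comp ra).ker, ?_, ?_⟩
  · -- Disjoint
    rw [AddSubgroup.disjoint_def]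
    rintro x ⟨a, rfl⟩ hker
    have h0 : f (ra (f a)) = 0 := AddMonoidHom.mem_ker.mp hker
    rwa [hrf] at h0
  · -- Codisjoint
    rw [codisjoint_iff_le_sup]
    intro x _
    refine AddSubgroup.mem_sup.mpr ⟨f (ra x), ⟨ra x, rfl⟩, x - f (ra x), ?_, add_sub_cancel _ _⟩
    have h2 : ra (x - f (ra x)) = 0 := by
      rw [map_sub, hrf]
      exact sub_self _
    show f (ra (x - f (ra x))) = 0
    rw [h2, map_zero]
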